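/- For any graph G, α(G) ≤ max{k ∈ ℤ | Σ_{i=1}^k d_i + C(χ(G)−1, 2) ≤ m(G)}, where χ(G) is the chromatic number. -/

import Mathlib

open Finset

namespace DSI

variable {V : Type*} (G : SimpleGraph V) [Fintype V] [DecidableEq V] [DecidableRel G.Adj]

/-- The degree sequence of `G`, sorted in non-decreasing order. -/
def dseq : List ℕ := (Finset.univ.val.map (fun v => G.degree v)).sort (· ≤ ·)

/-- The sum of the `k` smallest degrees, `Σ_{i=1}^k d_i`. -/
def sumSmallest (k : ℕ) : ℕ := ((dseq G).take k).sum

/-- The sum of the `k` largest degrees, `Σ_{i=1}^k d_{n-i+1}`. -/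
def sumLargest (k : ℕ) : ℕ := ((dseq G).reverse.take k).sum

/-- The number of edges `m(G)`. -/
def esize : ℕ := G.edgeFinset.card

/-- `m[S]`: the number of edges of the subgraph induced by `S`. -/
def mOn (S : Finset V) : ℕ := (S.sym2.filter (fun e => e ∈ G.edgeSet)).card

/-- A set `I` is `j`-independent if every vertex of `I` has fewer than `j` neighbours in `I`,
i.e. the induced subgraph has maximum degree `< j`. -/
def JIndep (j : ℕ) (I : Finset V) : Prop := ∀ v ∈ I, (I.filter (G.Adj v)).card < j

/-- The `j`-independence number `α_j(G)`. -/
noncomputable def alphaJ (j : ℕ) : ℕ := sSup {k | ∃ I : Finset V, JIndep G j I ∧ I.card = k}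

/-- The family `F` of maximum `j`-independent sets. -/
noncomputable def maxJIndep (j : ℕ) : Set (Finset V) :=
  {S | JIndep G j S ∧ S.card = alphaJ G j}

/-- `max_{S ∈ F} (m[V−S] − m[S])`. -/
noncomputable def fU (j : ℕ) : ℤ :=
  sSup ((fun S : Finset V => (mOn G Sᶜ : ℤ) - (mOn G S : ℤ)) '' maxJIndep G j)

/-- `min_{S ∈ F} (m[V−S] − m[S])`. -/
noncomputable def fL (j : ℕ) : ℤ :=
  sInf ((fun S : Finset V => (mOn G Sᶜ : ℤ) - (mOn G S : ℤ)) '' maxJIndep G j)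

/-- The upper `j`-annihilation number `a_j(G)`. -/
noncomputable def aJ (j : ℕ) : ℕ :=
  sSup {k | k ≤ Fintype.card V ∧ (sumSmallest G k : ℤ) + fU G j ≤ (esize G : ℤ)}

/-- The lower `j`-annihilation number `c_j(G)`. -/
noncomputable def cJ (j : ℕ) : ℕ :=
  sInf {k | k ≤ Fintype.card V ∧ (esize G : ℤ) ≤ (sumLargest G k : ℤ) + fL G j}

/-- The annihilation number `a(G)`. -/
noncomputable def annihilation : ℕ :=
  sSup {k | k ≤ Fintype.card V ∧ sumSmallest G k ≤ esize G}

/-- An independent set. -/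
def IndepSet (I : Finset V) : Prop := ∀ v ∈ I, ∀ w ∈ I, ¬ G.Adj v w

/-- The independence number `α(G)`. -/
noncomputable def alpha : ℕ := sSup {k | ∃ I : Finset V, IndepSet G I ∧ I.card = k}

end DSI
/-- The `j`-chromatic number `χ_j(G)`: the fewest number of `j`-independent sets that
the vertex set can be partitioned into (as colour classes of a colouring). -/
noncomputable def DSI.chiJ {V : Type*} (G : SimpleGraph V) [Fintype V]
    [DecidableEq V] [DecidableRel G.Adj] (j : ℕ) : ℕ :=
  sInf {t | ∃ f : V → Fin t, ∀ c : Fin t,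
    DSI.JIndep G j (Finset.univ.filter (fun v => f v = c))}

/-! A maximum independent set `I` satisfies `d_1 + ⋯ + d_α ≤ ∑_{v ∈ I} deg v`, and since `I`
is independent the right-hand side counts distinct edges, each meeting `I`. Let `H` be `G` with
those edges removed. Giving `I` one new colour shows `χ(G) ≤ χ(H) + 1`, and in a colouring of
`H` with `χ(H)` colours every pair of colours occurs on some edge (otherwise the two colours
could be merged), so `H` has at least `C(χ(H), 2)` edges. -/

namespace List

variable {α : Type*} [AddCommMonoid α] [LinearOrder α] [IsOrderedAddMonoid α]

theorem sum_take_length_le_sum_of_sublist {l₁ l₂ : List α} (h : l₁.Sublist l₂)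
    (hl₂ : l₂.Pairwise (· ≤ ·)) : (l₂.take l₁.length).sum ≤ l₁.sum := by
  induction h with
  | slnil => simp
  | @cons l₁ l₂ a h ih =>
    rw [pairwise_cons] at hl₂
    rcases l₁.eq_nil_or_concat' with rfl | ⟨l, b, rfl⟩
    · simp
    · have hm : l.length < l₂.length := by simpa using h.length_le
      have ha : a ≤ l₂[l.length] := hl₂.1 _ (getElem_mem hm)
      have ih := ih hl₂.2
      rw [length_append, length_singleton, take_add_one, getElem?_eq_getElem hm, sum_append] at ih
      simp only [length_append, length_singleton, take_succ_cons, sum_cons]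
      calc a + (l₂.take l.length).sum ≤ (l₂.take l.length).sum + l₂[l.length] := by
            rw [add_comm]; gcongr
        _ ≤ _ := by simpa using ih
  | @cons_cons l₁ l₂ a _ ih =>
    simpa using add_le_add_right (ih (pairwise_cons.mp hl₂).2) a

end List

theorem Multiset.sum_take_card_sort_le {α : Type*} [AddCommMonoid α] [LinearOrder α]
    [IsOrderedAddMonoid α] {s t : Multiset α} (hst : s ≤ t) :
    ((t.sort (· ≤ ·)).take (Multiset.card s)).sum ≤ s.sum := by
  have hsub : (s.sort (· ≤ ·)).Sublist (t.sort (· ≤ ·)) := by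
    refine List.sublist_of_subperm_of_pairwise ?_ (s.pairwise_sort _) (t.pairwise_sort _)
    rwa [← Multiset.coe_le, Multiset.sort_eq, Multiset.sort_eq]
  have h := List.sum_take_length_le_sum_of_sublist hsub (t.pairwise_sort _)
  rwa [Multiset.length_sort, ← Multiset.sum_coe (s.sort _), Multiset.sort_eq] at h

namespace SimpleGraph

variable {V α : Type*} {G : SimpleGraph V}

theorem Coloring.exists_adj_of_not_colorable [Fintype α] (C : G.Coloring α)
    (h : ¬ G.Colorable (Fintype.card α - 1)) {c c' : α} (hc : c ≠ c') :
    ∃ v w, G.Adj v w ∧ s(C v, C w) = s(c, c') := by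
  classical
  by_contra! hno
  -- otherwise recolouring `c'` as `c` saves a colour
  let merge (x : α) : {y // y ≠ c'} := if hx : x = c' then ⟨c, hc⟩ else ⟨x, hx⟩
  have hmerge : ∀ x, (merge x : α) = if x = c' then c else x := fun x => by
    unfold merge; split_ifs <;> rfl
  refine h ?_
  have hcard : Fintype.card {y // y ≠ c'} = Fintype.card α - 1 := by
    rw [Fintype.card_subtype_compl, Fintype.card_subtype_eq]
  rw [← hcard]
  refine Coloring.colorable (Coloring.mk (merge ∘ C) fun {v w} hvw heq => ?_)
  have heq : (merge (C v) : α) = merge (C w) := congrArg Subtype.val heq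
  rw [hmerge, hmerge] at heq
  split_ifs at heq with hv hw hw
  · exact C.valid hvw (hv.trans hw.symm)
  · exact hno v w hvw (by rw [hv, ← heq, Sym2.eq_swap])
  · exact hno v w hvw (by rw [hw, heq])
  · exact C.valid hvw heq

theorem choose_two_card_le_card_edgeFinset_of_not_colorable [Fintype α] [DecidableEq α]
    [Fintype G.edgeSet] (C : G.Coloring α) (h : ¬ G.Colorable (Fintype.card α - 1)) :
    (Fintype.card α).choose 2 ≤ #G.edgeFinset := by
  rw [← card_edgeFinset_top_eq_card_choose_two]
  refine card_le_card_of_surjOn (Sym2.map C) fun e he => ?_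
  induction e using Sym2.ind with
  | _ c c' =>
    obtain ⟨v, w, hvw, hvwc⟩ := C.exists_adj_of_not_colorable h (by simpa using he)
    exact ⟨s(v, w), by simpa using hvw, hvwc⟩

theorem colorable_sInf_colorable [Fintype V] : G.Colorable (sInf {n | G.Colorable n}) :=
  Nat.sInf_mem (s := {n | G.Colorable n}) ⟨_, G.colorable_of_fintype⟩

theorem choose_two_sInf_colorable_le_card_edgeFinset [Fintype V] [Fintype G.edgeSet] :
    (sInf {n | G.Colorable n}).choose 2 ≤ #G.edgeFinset := by
  obtain ⟨C⟩ := G.colorable_sInf_colorable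
  rcases Nat.eq_zero_or_pos (sInf {n | G.Colorable n}) with h0 | hpos
  · simp [h0]
  · have hmin := Nat.notMem_of_lt_sInf (Nat.sub_lt hpos one_pos)
    simpa using choose_two_card_le_card_edgeFinset_of_not_colorable C (by simpa using hmin)

def deleteIncidenceSets (G : SimpleGraph V) (s : Set V) : SimpleGraph V :=
  G.deleteEdges (⋃ v ∈ s, G.incidenceSet v)

theorem deleteIncidenceSets_adj {s : Set V} {v w : V} :
    (G.deleteIncidenceSets s).Adj v w ↔ G.Adj v w ∧ v ∉ s ∧ w ∉ s := by
  simp only [deleteIncidenceSets, deleteEdges_adj, Set.mem_iUnion, mk'_mem_incidenceSet_iff]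
  constructor
  · rintro ⟨hvw, hno⟩
    exact ⟨hvw, fun hv => hno ⟨v, hv, hvw, Or.inl rfl⟩,
      fun hw => hno ⟨w, hw, hvw, Or.inr rfl⟩⟩
  · rintro ⟨hvw, hv, hw⟩
    refine ⟨hvw, ?_⟩
    rintro ⟨u, hu, -, rfl | rfl⟩ <;> contradiction

theorem IsIndepSet.colorable_succ {s : Set V} (hs : G.IsIndepSet s) {n : ℕ}
    (h : (G.deleteIncidenceSets s).Colorable n) : G.Colorable (n + 1) := by
  classical
  obtain ⟨C⟩ := h
  let C' : G.Coloring (Option (Fin n)) :=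
    Coloring.mk (fun v => if v ∈ s then none else some (C v)) fun {v w} hvw heq => by
      by_cases hv : v ∈ s <;> by_cases hw : w ∈ s <;> simp only [hv, hw, if_true, if_false,
        reduceCtorEq, Option.some.injEq] at heq
      · exact hs hv hw hvw.ne hvw
      · exact C.valid (deleteIncidenceSets_adj.mpr ⟨hvw, hv, hw⟩) heq
  simpa using C'.colorable

theorem IsIndepSet.sum_degree_add_card_edgeFinset_deleteIncidenceSets [Fintype V] [DecidableEq V]
    [DecidableRel G.Adj] {s : Finset V} (hs : G.IsIndepSet ↑s)
    [Fintype (G.deleteIncidenceSets ↑s).edgeSet] :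
    ∑ v ∈ s, G.degree v + #(G.deleteIncidenceSets ↑s).edgeFinset = #G.edgeFinset := by
  have hdeg : ∑ v ∈ s, G.degree v = #(s.biUnion (G.incidenceFinset ·)) := by
    rw [card_biUnion]
    · simp_rw [card_incidenceFinset_eq_degree]
    · intro v hv w hw hne
      rw [Function.onFun, Finset.disjoint_left]
      intro e hev hew
      rw [mem_incidenceFinset] at hev hew
      exact hs hv hw hne (G.adj_of_mem_incidenceSet hne hev hew)
  have hedges : (G.deleteIncidenceSets ↑s).edgeFinset =
      G.edgeFinset \ s.biUnion (G.incidenceFinset ·) := by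
    apply coe_injective
    rw [coe_edgeFinset, coe_sdiff, coe_edgeFinset, coe_biUnion]
    simp only [deleteIncidenceSets, edgeSet_deleteEdges, coe_incidenceFinset]
  rw [hdeg, hedges, add_comm, card_sdiff_add_card_eq_card]
  exact biUnion_subset.mpr fun v _ => G.incidenceFinset_subset v

end SimpleGraph

namespace DSI

variable {V : Type*} {G : SimpleGraph V}

theorem IndepSet.isIndepSet {I : Finset V} (h : IndepSet G I) : G.IsIndepSet ↑I :=
  fun v hv w hw _ => h v hv w hw

theorem exists_indepSet_card_eq_alpha (G : SimpleGraph V) [Fintype V] :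
    ∃ I, IndepSet G I ∧ #I = alpha G :=
  Nat.sSup_mem (s := {k | ∃ I : Finset V, IndepSet G I ∧ #I = k})
    ⟨0, ∅, by simp [IndepSet]⟩
    ⟨Fintype.card V, by rintro _ ⟨I, -, rfl⟩; exact card_le_univ I⟩

variable [Fintype V] [DecidableRel G.Adj]

theorem chiJ_one_le_of_colorable [DecidableEq V] {n : ℕ} (h : G.Colorable n) :
    chiJ G 1 ≤ n := by
  obtain ⟨C⟩ := h
  refine Nat.sInf_le ⟨C, fun c v hv => ?_⟩
  rw [Nat.lt_one_iff, card_eq_zero, filter_eq_empty_iff]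
  intro w hw hvw
  exact C.valid hvw ((mem_filter.mp hv).2.trans (mem_filter.mp hw).2.symm)

variable (G) in
theorem sumSmallest_card_le_sum_degree (s : Finset V) :
    sumSmallest G #s ≤ ∑ v ∈ s, G.degree v := by
  have h := Multiset.sum_take_card_sort_le
    (Multiset.map_le_map (f := (G.degree ·)) (val_le_iff.mpr (subset_univ s)))
  rw [Multiset.card_map] at h
  exact h

end DSI

theorem alpha_chromatic_bound {V : Type*} (G : SimpleGraph V) [Fintype V]
    [DecidableEq V] [DecidableRel G.Adj] :
    DSI.alpha G ≤ sSup {k | k ≤ Fintype.card V ∧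
      DSI.sumSmallest G k + (DSI.chiJ G 1 - 1).choose 2 ≤ DSI.esize G} := by
  classical
  obtain ⟨I, hI, hIcard⟩ := DSI.exists_indepSet_card_eq_alpha G
  set H := G.deleteIncidenceSets ↑I
  have hχ : DSI.chiJ G 1 - 1 ≤ sInf {n | H.Colorable n} := by
    have := DSI.chiJ_one_le_of_colorable <|
      hI.isIndepSet.colorable_succ H.colorable_sInf_colorable
    omega
  refine le_csSup ⟨Fintype.card V, fun _ hk => hk.1⟩ ⟨hIcard ▸ card_le_univ I, ?_⟩
  calc DSI.sumSmallest G (DSI.alpha G) + (DSI.chiJ G 1 - 1).choose 2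
      ≤ ∑ v ∈ I, G.degree v + #H.edgeFinset := by
        rw [← hIcard]
        gcongr
        · exact DSI.sumSmallest_card_le_sum_degree G I
        · exact (Nat.choose_le_choose 2 hχ).trans H.choose_two_sInf_colorable_le_card_edgeFinset
    _ = DSI.esize G := hI.isIndepSet.sum_degree_add_card_edgeFinset_deleteIncidenceSets
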